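/- arXiv:1406.1474 — 4 statements merged into one kernel-verified Lean document; each statement's English description precedes it below -/
import Mathlib

section
/- The scalar time-varying system x'(t) = (exp(-t^2) - 1) x(t) on Ω = (-1,1) is a contraction after small transient in time (STC): for each τ > 0 there exists ℓ = ℓ(τ) > 0 such that |x(t₂+τ, t₁, a) - x(t₂+τ, t₁, b)| ≤ exp(-(t₂-t₁)ℓ) |a-b| for all t₂ ≥ t₁ ≥ 0 and all a, b ∈ Ω. In particular, one may take ℓ(τ) = (1 - exp(-τ²))/2. -/
open Real Set

/-- The error function `erf z = (2/√π) ∫₀^z exp(-s²) ds`. -/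
noncomputable def erf (z : ℝ) : ℝ := (2 / Real.sqrt π) * ∫ s in (0:ℝ)..z, Real.exp (-s ^ 2)

/-- `g t = (√π/2) erf t - t`, so that `g' t = exp(-t²) - 1`. -/
noncomputable def g (t : ℝ) : ℝ := (Real.sqrt π / 2) * erf t - t

/-- Solution of `x' = (exp(-t²) - 1) x` with `x(t₁) = a`. -/
noncomputable def sol (t t₁ a : ℝ) : ℝ := Real.exp (g t - g t₁) * a

lemma g_eq (t : ℝ) : g t = (∫ s in (0:ℝ)..t, Real.exp (-s ^ 2)) - t := by
  have hπ : Real.sqrt π ≠ 0 := ne_of_gt (Real.sqrt_pos.mpr Real.pi_pos)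
  unfold g erf
  field_simp

lemma integrable_exp_sq (a b : ℝ) :
    IntervalIntegrable (fun s => Real.exp (-s ^ 2)) MeasureTheory.volume a b :=
  (Continuous.rexp (by continuity)).intervalIntegrable a b

lemma g_sub (t₁ t : ℝ) :
    g t - g t₁ = (∫ s in t₁..t, Real.exp (-s ^ 2)) - (t - t₁) := by
  rw [g_eq, g_eq]
  have := intervalIntegral.integral_interval_sub_left (integrable_exp_sq 0 t) (integrable_exp_sq 0 t₁)
  linarith [this]

/-- The system `x' = (exp(-t²)-1)x` on `Ω = (-1,1)` is STC: for each `τ > 0` there is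
`ℓ = ℓ(τ) > 0` (one may take `ℓ = (1 - exp(-τ²))/2`) such that
`|x(t₂+τ,t₁,a) - x(t₂+τ,t₁,b)| ≤ exp(-(t₂-t₁)ℓ)|a-b|` for all `t₂ ≥ t₁ ≥ 0`, `a,b ∈ Ω`. -/
theorem stmt0 (τ : ℝ) (hτ : 0 < τ) :
    ∃ ℓ : ℝ, 0 < ℓ ∧ ℓ = (1 - Real.exp (-τ ^ 2)) / 2 ∧
      ∀ t₁ t₂ : ℝ, 0 ≤ t₁ → t₁ ≤ t₂ → ∀ a ∈ Ioo (-1 : ℝ) 1, ∀ b ∈ Ioo (-1 : ℝ) 1,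
        |sol (t₂ + τ) t₁ a - sol (t₂ + τ) t₁ b| ≤ Real.exp (-(t₂ - t₁) * ℓ) * |a - b| := by
  set e := Real.exp (-τ ^ 2) with he
  have he1 : e < 1 := by
    rw [he]
    have : -τ ^ 2 < 0 := by nlinarith
    calc Real.exp (-τ ^ 2) < Real.exp 0 := Real.exp_lt_exp.mpr this
      _ = 1 := Real.exp_zero
  have he0 : 0 < e := Real.exp_pos _
  refine ⟨(1 - e) / 2, by linarith, rfl, ?_⟩
  intro t₁ t₂ h0 h12 a _ b _
  set ℓ := (1 - e) / 2 with hℓ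
  -- key inequality on g
  have key : g (t₂ + τ) - g t₁ ≤ -(t₂ - t₁) * ℓ := by
    rw [g_sub]
    set m := max t₁ τ with hm
    have hm1 : t₁ ≤ m := le_max_left _ _
    have hmτ : τ ≤ m := le_max_right _ _
    have hmT : m ≤ t₂ + τ := by
      rcases max_cases t₁ τ with ⟨h, _⟩ | ⟨h, _⟩ <;> rw [hm, h] <;> linarith
    have hsplit : (∫ s in t₁..(t₂+τ), Real.exp (-s ^ 2)) =
        (∫ s in t₁..m, Real.exp (-s ^ 2)) + ∫ s in m..(t₂+τ), Real.exp (-s ^ 2) :=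
      (intervalIntegral.integral_add_adjacent_intervals (integrable_exp_sq t₁ m)
        (integrable_exp_sq m (t₂+τ))).symm
    have h1 : (∫ s in t₁..m, Real.exp (-s ^ 2)) ≤ m - t₁ := by
      have : (∫ s in t₁..m, Real.exp (-s ^ 2)) ≤ ∫ _ in t₁..m, (1:ℝ) := by
        apply intervalIntegral.integral_mono_on hm1 (integrable_exp_sq t₁ m)
          intervalIntegrable_const
        intro x _
        calc Real.exp (-x ^ 2) ≤ Real.exp 0 := Real.exp_le_exp.mpr (by nlinarith)
          _ = 1 := Real.exp_zero
      simpa using this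
    have h2 : (∫ s in m..(t₂+τ), Real.exp (-s ^ 2)) ≤ (t₂ + τ - m) * e := by
      have : (∫ s in m..(t₂+τ), Real.exp (-s ^ 2)) ≤ ∫ _ in m..(t₂+τ), e := by
        apply intervalIntegral.integral_mono_on hmT (integrable_exp_sq m (t₂+τ))
          intervalIntegrable_const
        intro x hx
        rw [he]
        apply Real.exp_le_exp.mpr
        have hx1 : τ ≤ x := le_trans hmτ hx.1
        nlinarith
      simpa [mul_comm] using this
    have hTm : t₂ - t₁ ≤ t₂ + τ - m := by
      rcases max_cases t₁ τ with ⟨h, _⟩ | ⟨h, _⟩ <;> rw [hm, h] <;> linarith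
    rw [hsplit]
    have hℓ' : ℓ = (1 - e) / 2 := hℓ
    nlinarith [h1, h2, hTm]
  have habs : |sol (t₂ + τ) t₁ a - sol (t₂ + τ) t₁ b|
      = Real.exp (g (t₂ + τ) - g t₁) * |a - b| := by
    unfold sol
    rw [← mul_sub, abs_mul, abs_of_pos (Real.exp_pos _)]
  rw [habs]
  exact mul_le_mul_of_nonneg_right (Real.exp_le_exp.mpr key) (abs_nonneg _)
end

section
/- A system x' = f(t,x) on Ω is SOST with respect to a norm |·|_v if and only if for each τ > 0 there exists ℓ = ℓ(τ) > 0 such that |x(t₂+τ,t₁,a) - x(t₂+τ,t₁,b)|_v ≤ (1+τ)exp(-(t₂-t₁)ℓ)|a-b|_v for all t₂ ≥ t₁ ≥ 0 and a,b ∈ Ω. -/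
open Set

/-- A system is SOST with respect to a norm `N = |·|_v` if and only if for each `τ > 0`
there exists `ℓ = ℓ(τ) > 0` such that
`|x(t₂+τ,t₁,a) - x(t₂+τ,t₁,b)|_v ≤ (1+τ) exp(-(t₂-t₁)ℓ) |a-b|_v`
for all `t₂ ≥ t₁ ≥ 0` and `a,b ∈ Ω` (the overshoot coupled to the transient, `ε = τ`).
Here `x t t₁ a` denotes the solution with `x(t₁) = a` and `N` is the given vector norm. -/
theorem stmt11 {E : Type*} [NormedAddCommGroup E] [NormedSpace ℝ E]
    (Ω : Set E) (x : ℝ → ℝ → E → E) (N : E → ℝ)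
    (hN0 : ∀ y, 0 ≤ N y) (hNdef : ∀ y, N y = 0 ↔ y = 0)
    (hNadd : ∀ y z, N (y + z) ≤ N y + N z)
    (hNsmul : ∀ (c : ℝ) y, N (c • y) = |c| * N y) :
    (∀ ε : ℝ, 0 < ε → ∀ τ : ℝ, 0 < τ → ∃ ℓ : ℝ, 0 < ℓ ∧
        ∀ t₁ : ℝ, 0 ≤ t₁ → ∀ t₂ : ℝ, t₁ ≤ t₂ → ∀ a ∈ Ω, ∀ b ∈ Ω,
          N (x (t₂ + τ) t₁ a - x (t₂ + τ) t₁ b) ≤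
            (1 + ε) * Real.exp (-(t₂ - t₁) * ℓ) * N (a - b)) ↔
    (∀ τ : ℝ, 0 < τ → ∃ ℓ : ℝ, 0 < ℓ ∧
        ∀ t₁ : ℝ, 0 ≤ t₁ → ∀ t₂ : ℝ, t₁ ≤ t₂ → ∀ a ∈ Ω, ∀ b ∈ Ω,
          N (x (t₂ + τ) t₁ a - x (t₂ + τ) t₁ b) ≤
            (1 + τ) * Real.exp (-(t₂ - t₁) * ℓ) * N (a - b)) := by
  constructor
  · intro h τ hτ
    exact h τ hτ τ hτ
  · intro h ε hε τ hτ
    set τ' : ℝ := min ε τ with hτ'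
    have hτ'pos : 0 < τ' := lt_min hε hτ
    obtain ⟨ℓ, hℓ, hmain⟩ := h τ' hτ'pos
    refine ⟨ℓ, hℓ, fun t₁ ht₁ t₂ ht₂ a ha b hb => ?_⟩
    have hd : 0 ≤ τ - τ' := by
      have : τ' ≤ τ := min_le_right _ _
      linarith
    have key := hmain t₁ ht₁ (t₂ + (τ - τ')) (by linarith) a ha b hb
    have heq : t₂ + (τ - τ') + τ' = t₂ + τ := by ring
    rw [heq] at key
    refine key.trans ?_
    have hNab := hN0 (a - b)
    have hε' : τ' ≤ ε := min_le_left _ _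
    have hexp : Real.exp (-(t₂ + (τ - τ') - t₁) * ℓ) ≤ Real.exp (-(t₂ - t₁) * ℓ) := by
      apply Real.exp_le_exp.mpr
      nlinarith
    have h1 : (1 : ℝ) + τ' ≤ 1 + ε := by linarith
    have hposℓ : 0 ≤ Real.exp (-(t₂ + (τ - τ') - t₁) * ℓ) := (Real.exp_pos _).le
    have : (1 + τ') * Real.exp (-(t₂ + (τ - τ') - t₁) * ℓ) ≤ (1 + ε) * Real.exp (-(t₂ - t₁) * ℓ) :=
      mul_le_mul h1 hexp hposℓ (by linarith)
    exact mul_le_mul_of_nonneg_right this hNab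
end

section
/- Suppose the system x' = f(t,x) on Ω has small expansion (SWE): for each δ > 0 there exists τ₀ > 0 such that |x(t,t₀,a) - x(t,t₀,b)| ≤ (1+δ)|a-b| for all t ∈ [t₀, t₀+τ₀], a,b ∈ Ω, t₀ ≥ 0. Then the system is SOST if and only if it is SO. -/
open Set

/-- If the system `x' = f(t,x)` on `Ω` has small expansion (SWE): for each `δ > 0`
there exists `τ₀ > 0` with `|x(t,t₀,a) - x(t,t₀,b)| ≤ (1+δ)|a-b|` for all
`t ∈ [t₀, t₀+τ₀]`, `a,b ∈ Ω`, `t₀ ≥ 0` — then the system is SOST if and only if it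
is SO. Here `x t t₀ a` denotes the solution with `x(t₀) = a`. -/
theorem stmt13 {E : Type*} [NormedAddCommGroup E] [NormedSpace ℝ E]
    (Ω : Set E) (x : ℝ → ℝ → E → E)
    (hSWE : ∀ δ : ℝ, 0 < δ → ∃ τ₀ : ℝ, 0 < τ₀ ∧
        ∀ t₀ : ℝ, 0 ≤ t₀ → ∀ t ∈ Set.Icc t₀ (t₀ + τ₀), ∀ a ∈ Ω, ∀ b ∈ Ω,
          ‖x t t₀ a - x t t₀ b‖ ≤ (1 + δ) * ‖a - b‖) :
    -- SOST
    (∀ ε : ℝ, 0 < ε → ∀ τ : ℝ, 0 < τ → ∃ ℓ : ℝ, 0 < ℓ ∧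
        ∀ t₁ : ℝ, 0 ≤ t₁ → ∀ t₂ : ℝ, t₁ ≤ t₂ → ∀ a ∈ Ω, ∀ b ∈ Ω,
          ‖x (t₂ + τ) t₁ a - x (t₂ + τ) t₁ b‖ ≤
            (1 + ε) * Real.exp (-(t₂ - t₁) * ℓ) * ‖a - b‖) ↔
    -- SO
    (∀ ε : ℝ, 0 < ε → ∃ ℓ : ℝ, 0 < ℓ ∧
        ∀ t₁ : ℝ, 0 ≤ t₁ → ∀ t₂ : ℝ, t₁ ≤ t₂ → ∀ a ∈ Ω, ∀ b ∈ Ω,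
          ‖x t₂ t₁ a - x t₂ t₁ b‖ ≤
            (1 + ε) * Real.exp (-(t₂ - t₁) * ℓ) * ‖a - b‖) := by
  constructor
  · -- SOST → SO
    intro hSOST ε hε
    obtain ⟨τ₀, hτ₀, hswe⟩ := hSWE (ε/2) (by positivity)
    obtain ⟨ℓ, hℓ, hsost⟩ := hSOST (ε/2) (by positivity) τ₀ hτ₀
    have hlogpos : 0 < Real.log ((1+ε)/(1+ε/2)) := by
      apply Real.log_pos
      rw [lt_div_iff₀ (by linarith)]
      linarith
    set c : ℝ := (1/τ₀) * Real.log ((1+ε)/(1+ε/2)) with hc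
    have hcpos : 0 < c := by positivity
    set ℓ' : ℝ := min ℓ c with hℓ'def
    have hℓ'pos : 0 < ℓ' := lt_min hℓ hcpos
    have hℓ'le : ℓ' ≤ ℓ := min_le_left _ _
    have hℓ'lec : ℓ' ≤ c := min_le_right _ _
    refine ⟨ℓ', hℓ'pos, ?_⟩
    have hkey : (1 + ε/2) * Real.exp (τ₀ * ℓ') ≤ 1 + ε := by
      have h1 : Real.exp (τ₀ * ℓ') ≤ (1+ε)/(1+ε/2) := by
        rw [← Real.exp_log (show (0:ℝ) < (1+ε)/(1+ε/2) by positivity)]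
        apply Real.exp_le_exp.mpr
        have : τ₀ * ℓ' ≤ τ₀ * c := by nlinarith
        calc τ₀ * ℓ' ≤ τ₀ * c := this
          _ = Real.log ((1+ε)/(1+ε/2)) := by rw [hc]; field_simp
      calc (1+ε/2) * Real.exp (τ₀*ℓ') ≤ (1+ε/2) * ((1+ε)/(1+ε/2)) := by
            nlinarith [Real.exp_pos (τ₀*ℓ')]
        _ = 1+ε := by field_simp
    intro t₁ ht₁ t₂ ht₁₂ a ha b hb
    have hnn : (0:ℝ) ≤ ‖a - b‖ := norm_nonneg _
    by_cases hcase : t₂ ≤ t₁ + τ₀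
    · have h1 := hswe t₁ ht₁ t₂ ⟨ht₁₂, hcase⟩ a ha b hb
      have hexp : Real.exp (τ₀*ℓ') * Real.exp (-(τ₀*ℓ')) = 1 := by
        rw [← Real.exp_add]; simp
      have h2 : (1 + ε/2) ≤ (1+ε) * Real.exp (-(t₂-t₁)*ℓ') := by
        have e2 : Real.exp (-(τ₀*ℓ')) ≤ Real.exp (-(t₂-t₁)*ℓ') := by
          apply Real.exp_le_exp.mpr
          nlinarith
        have e3 : (1+ε/2) ≤ (1+ε) * Real.exp (-(τ₀*ℓ')) := by
          have := mul_le_mul_of_nonneg_right hkey (Real.exp_pos (-(τ₀*ℓ'))).le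
          calc (1+ε/2) = (1+ε/2) * (Real.exp (τ₀*ℓ') * Real.exp (-(τ₀*ℓ'))) := by
                rw [hexp]; ring
            _ = (1+ε/2) * Real.exp (τ₀*ℓ') * Real.exp (-(τ₀*ℓ')) := by ring
            _ ≤ (1+ε) * Real.exp (-(τ₀*ℓ')) := this
        calc (1+ε/2) ≤ (1+ε) * Real.exp (-(τ₀*ℓ')) := e3
          _ ≤ (1+ε) * Real.exp (-(t₂-t₁)*ℓ') := by nlinarith
      calc ‖x t₂ t₁ a - x t₂ t₁ b‖ ≤ (1+ε/2) * ‖a-b‖ := h1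
        _ ≤ (1+ε) * Real.exp (-(t₂-t₁)*ℓ') * ‖a-b‖ := by nlinarith
    · push_neg at hcase
      have h1 := hsost t₁ ht₁ (t₂ - τ₀) (by linarith) a ha b hb
      rw [show t₂ - τ₀ + τ₀ = t₂ by ring] at h1
      have h2 : (1+ε/2) * Real.exp (-(t₂-τ₀-t₁)*ℓ) ≤ (1+ε) * Real.exp (-(t₂-t₁)*ℓ') := by
        have e1 : Real.exp (-(t₂-τ₀-t₁)*ℓ)
            = Real.exp (τ₀*ℓ') * Real.exp (-(t₂-t₁)*ℓ') * Real.exp (-(t₂-t₁-τ₀)*(ℓ-ℓ')) := by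
          rw [← Real.exp_add, ← Real.exp_add]; ring_nf
        have e2 : Real.exp (-(t₂-t₁-τ₀)*(ℓ-ℓ')) ≤ 1 := by
          rw [Real.exp_le_one_iff]
          nlinarith
        have e3 : Real.exp (-(t₂-τ₀-t₁)*ℓ) ≤ Real.exp (τ₀*ℓ') * Real.exp (-(t₂-t₁)*ℓ') := by
          rw [e1]
          exact mul_le_of_le_one_right (by positivity) e2
        calc (1+ε/2) * Real.exp (-(t₂-τ₀-t₁)*ℓ)
            ≤ (1+ε/2) * (Real.exp (τ₀*ℓ') * Real.exp (-(t₂-t₁)*ℓ')) := by nlinarith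
          _ = ((1+ε/2) * Real.exp (τ₀*ℓ')) * Real.exp (-(t₂-t₁)*ℓ') := by ring
          _ ≤ (1+ε) * Real.exp (-(t₂-t₁)*ℓ') := by
              nlinarith [Real.exp_pos (-(t₂-t₁)*ℓ')]
      calc ‖x t₂ t₁ a - x t₂ t₁ b‖ ≤ (1+ε/2) * Real.exp (-(t₂-τ₀-t₁)*ℓ) * ‖a-b‖ := h1
        _ ≤ (1+ε) * Real.exp (-(t₂-t₁)*ℓ') * ‖a-b‖ := by nlinarith
  · -- SO → SOST
    intro hSO ε hε τ hτ
    obtain ⟨ℓ, hℓ, h⟩ := hSO ε hε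
    refine ⟨ℓ, hℓ, ?_⟩
    intro t₁ ht₁ t₂ ht₁₂ a ha b hb
    have h1 := h t₁ ht₁ (t₂ + τ) (by linarith) a ha b hb
    have h2 : Real.exp (-(t₂ + τ - t₁)*ℓ) ≤ Real.exp (-(t₂-t₁)*ℓ) := by
      apply Real.exp_le_exp.mpr
      nlinarith
    calc ‖x (t₂+τ) t₁ a - x (t₂+τ) t₁ b‖ ≤ (1+ε) * Real.exp (-(t₂+τ-t₁)*ℓ) * ‖a-b‖ := h1
      _ ≤ (1+ε) * Real.exp (-(t₂-t₁)*ℓ) * ‖a-b‖ := by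
          gcongr
end

section
/- Consider the biochemical control circuit x₁' = g(xₙ) - α₁x₁, xᵢ' = x_{i-1} - αᵢxᵢ for i = 2,…,n, with g(u) = (1+u)/(k+u), k > 1, αᵢ > 0, and let α = ∏αᵢ. If k - 1 < αk², then there exists ε > 0 such that the scaled L¹ matrix measure μ_{1,D_ε}(J(x)) ≤ -ε/2 < 0 for all x ∈ ℝⁿ₊, where D_ε = diag(1, α₁-ε, (α₁-ε)(α₂-ε), …, ∏_{i=1}^{n-1}(αᵢ-ε)); hence the system is contractive on ℝⁿ₊ with respect to the norm |z| = |D_ε z|₁. -/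
/-!
With the weights `D_ε` the columns of the Jacobian become diagonally dominant: column `j < n`
has measure `-αⱼ + (αⱼ - ε) = -ε`, and the last one `-αₙ + g'(xₙ) / ∏_{i<n} (αᵢ - ε)`, which
is at most `-ε/2` for small `ε` since `g' ≤ (k-1)/k² < ∏ αᵢ`. For two trajectories the
difference `w = D_ε (x - y)` satisfies `w' = D_ε A D_ε⁻¹ w` exactly, where `A` is the Jacobian
with `g'(xₙ)` replaced by the secant slope of `g`, which lies in the same range `[0, (k-1)/k²]`.
One Euler step bounds the right Dini derivative of `‖w‖₁` by `-ε/2 ‖w‖₁`, and Grönwall's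
inequality gives decay at rate `ε/2`.
-/

open Finset

/-- The index `n-1` (the last coordinate) in `Fin n`. -/
def lastIdx (n : ℕ) (hn : 0 < n) : Fin n := ⟨n - 1, by omega⟩

/-- The nonlinearity `g(u) = (1+u)/(k+u)`. -/
noncomputable def gfun (k u : ℝ) : ℝ := (1 + u) / (k + u)

/-- The vector field of the biochemical control circuit:
`F₁ = g(xₙ) - α₁x₁`, `Fᵢ = x_{i-1} - αᵢxᵢ` for `i ≥ 2`. -/
noncomputable def Ffield (n : ℕ) (hn : 0 < n) (k : ℝ) (α : Fin n → ℝ)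
    (x : Fin n → ℝ) : Fin n → ℝ := fun i =>
  if (i : ℕ) = 0 then gfun k (x (lastIdx n hn)) - α i * x i
  else x ⟨(i : ℕ) - 1, by have := i.isLt; omega⟩ - α i * x i

/-- The Jacobian of the circuit: diagonal `-αᵢ`, subdiagonal `1`,
top-right entry `g'(xₙ) = (k-1)/(k+xₙ)²`. -/
noncomputable def Jmat (n : ℕ) (hn : 0 < n) (k : ℝ) (α : Fin n → ℝ)
    (x : Fin n → ℝ) : Matrix (Fin n) (Fin n) ℝ := fun i j =>
  if i = j then -α i
  else if (i : ℕ) = (j : ℕ) + 1 then 1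
  else if (i : ℕ) = 0 ∧ j = lastIdx n hn then (k - 1) / (k + x (lastIdx n hn)) ^ 2
  else 0

/-- The `L¹` matrix measure: `μ₁(A) = max_j (A_jj + ∑_{i≠j} |A_ij|)`. -/
noncomputable def mu1 {n : ℕ} (A : Matrix (Fin n) (Fin n) ℝ) : ℝ :=
  ⨆ j, (A j j + ∑ i ∈ Finset.univ.erase j, |A i j|)

/-- The scaling matrix `D_ε = diag(1, α₁-ε, (α₁-ε)(α₂-ε), …, ∏_{i<n-1}(αᵢ-ε))`. -/
noncomputable def Dmat (n : ℕ) (α : Fin n → ℝ) (ε : ℝ) : Matrix (Fin n) (Fin n) ℝ :=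
  Matrix.diagonal fun i => ∏ j ∈ Finset.Iio i, (α j - ε)

open Filter Topology Matrix

section VectorsAndMatrices

variable {ι κ : Type*} [Fintype ι] [Fintype κ]

def l1norm (v : ι → ℝ) : ℝ := ∑ i, |v i|

lemma l1norm_nonneg (v : ι → ℝ) : 0 ≤ l1norm v :=
  sum_nonneg fun _ _ => abs_nonneg _

lemma l1norm_add_le (v w : ι → ℝ) : l1norm (v + w) ≤ l1norm v + l1norm w := by
  rw [l1norm, l1norm, l1norm, ← sum_add_distrib]
  exact sum_le_sum fun i _ => abs_add_le (v i) (w i)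

lemma l1norm_smul (c : ℝ) (v : ι → ℝ) : l1norm (c • v) = |c| * l1norm v := by
  simp only [l1norm, Pi.smul_apply, smul_eq_mul, abs_mul, mul_sum]

lemma continuous_l1norm : Continuous (l1norm : (ι → ℝ) → ℝ) :=
  continuous_finsetSum _ fun i _ => (continuous_apply i).abs

lemma l1norm_mulVec_le (M : Matrix κ ι ℝ) (v : ι → ℝ) :
    l1norm (M *ᵥ v) ≤ ∑ j, (∑ i, |M i j|) * |v j| := by
  calc l1norm (M *ᵥ v) ≤ ∑ i, ∑ j, |M i j| * |v j| :=
        sum_le_sum fun i _ => (abs_sum_le_sum_abs _ _).trans_eq (by simp only [abs_mul])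
    _ = ∑ j, (∑ i, |M i j|) * |v j| := by rw [sum_comm]; simp only [sum_mul]

lemma hasDerivAt_mulVec (M : Matrix κ ι ℝ) {f : ℝ → ι → ℝ} {f' : ι → ℝ} {s : ℝ}
    (hf : HasDerivAt f f' s) : HasDerivAt (fun t => M *ᵥ f t) (M *ᵥ f') s :=
  (LinearMap.toContinuousLinearMap (Matrix.mulVecLin M)).hasFDerivAt.comp_hasDerivAt s hf

end VectorsAndMatrices

section MatrixMeasure

variable {n : ℕ}

def colMeasure (B : Matrix (Fin n) (Fin n) ℝ) (j : Fin n) : ℝ :=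
  B j j + ∑ i ∈ univ.erase j, |B i j|

lemma colMeasure_le_mu1 (B : Matrix (Fin n) (Fin n) ℝ) (j : Fin n) : colMeasure B j ≤ mu1 B :=
  le_ciSup (Set.finite_range _).bddAbove j

lemma mu1_le_of_forall_colMeasure_le [NeZero n] {B : Matrix (Fin n) (Fin n) ℝ} {c : ℝ}
    (h : ∀ j, colMeasure B j ≤ c) : mu1 B ≤ c :=
  ciSup_le h

lemma colMeasure_eq_of_forall_ne {B : Matrix (Fin n) (Fin n) ℝ} {i₀ j : Fin n}
    (hne : i₀ ≠ j) (h : ∀ i, i ≠ j → i ≠ i₀ → B i j = 0) :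
    colMeasure B j = B j j + |B i₀ j| := by
  rw [colMeasure, sum_eq_single_of_mem i₀ (mem_erase.2 ⟨hne, mem_univ _⟩)]
  intro i hi hii₀
  rw [h i (ne_of_mem_erase hi) hii₀, abs_zero]

lemma sum_abs_one_add_smul_apply {B : Matrix (Fin n) (Fin n) ℝ} {h : ℝ} (hh : 0 ≤ h)
    {j : Fin n} (hj : -1 ≤ h * B j j) :
    ∑ i, |(1 + h • B) i j| = 1 + h * colMeasure B j := by
  rw [← add_sum_erase _ _ (mem_univ j), colMeasure, mul_add, mul_sum, ← add_assoc]
  congr 1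
  · simp only [Matrix.add_apply, one_apply_eq, Matrix.smul_apply, smul_eq_mul]
    exact abs_of_nonneg (by linarith)
  · refine sum_congr rfl fun i hi => ?_
    rw [Matrix.add_apply, one_apply_ne (ne_of_mem_erase hi), zero_add, Matrix.smul_apply,
      smul_eq_mul, abs_mul, abs_of_nonneg hh]

/-- For small `h ≥ 0`, `1 + h * mu1 B` is the `L¹` operator norm of `1 + h • B`; `mu1 B` is its
derivative at `h = 0`. -/
lemma l1norm_add_smul_mulVec_le (B : Matrix (Fin n) (Fin n) ℝ) (w : Fin n → ℝ) {h : ℝ}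
    (hh : 0 ≤ h) (hB : ∀ j, -1 ≤ h * B j j) :
    l1norm (w + h • B *ᵥ w) ≤ (1 + h * mu1 B) * l1norm w := by
  have hw : w + h • B *ᵥ w = (1 + h • B) *ᵥ w := by
    rw [add_mulVec, one_mulVec, smul_mulVec]
  rw [hw]
  refine (l1norm_mulVec_le _ w).trans ?_
  rw [l1norm, mul_sum]
  refine sum_le_sum fun j _ => ?_
  rw [sum_abs_one_add_smul_apply hh (hB j)]
  gcongr
  exact colMeasure_le_mu1 B j

lemma eventually_slope_l1norm_lt {w : ℝ → Fin n → ℝ} {B : Matrix (Fin n) (Fin n) ℝ} {s r : ℝ}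
    (hw : HasDerivAt w (B *ᵥ w s) s) (hr : mu1 B * l1norm (w s) < r) :
    ∀ᶠ z in 𝓝[>] s, (z - s)⁻¹ * (l1norm (w z) - l1norm (w s)) < r := by
  set v := B *ᵥ w s
  have hslope : Tendsto (fun z => l1norm (slope w s z - v)) (𝓝[>] s) (𝓝 0) := by
    have h := ((hasDerivAt_iff_tendsto_slope.1 hw).mono_left (nhdsGT_le_nhdsNE s)).sub_const v
    have hzero : l1norm (v - v) = 0 := by simp [l1norm]
    exact hzero ▸ (continuous_l1norm.tendsto (v - v)).comp h
  have hsmall : ∀ᶠ z in 𝓝[>] s, ∀ j, -1 ≤ (z - s) * B j j := by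
    refine eventually_all.2 fun j => ?_
    have h : Tendsto (fun z => (z - s) * B j j) (𝓝[>] s) (𝓝 0) := by
      refine Tendsto.mono_left ?_ nhdsWithin_le_nhds
      simpa using ((continuous_id.sub continuous_const).mul continuous_const).tendsto
        (f := fun z : ℝ => (z - s) * B j j) s
    exact (h.eventually_const_lt (by norm_num : (-1 : ℝ) < 0)).mono fun _ => le_of_lt
  filter_upwards [hslope.eventually_lt_const (sub_pos.2 hr), hsmall, self_mem_nhdsWithin]
    with z hz hzB (hsz : s < z)
  have hpos : 0 < z - s := sub_pos.2 hsz
  have hsplit : w z = (w s + (z - s) • v) + (z - s) • (slope w s z - v) := by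
    rw [slope_def_module, smul_sub, smul_inv_smul₀ hpos.ne']
    abel
  have hbound : l1norm (w z) ≤ (1 + (z - s) * mu1 B) * l1norm (w s)
      + (z - s) * l1norm (slope w s z - v) := by
    calc l1norm (w z) ≤ l1norm (w s + (z - s) • v) + l1norm ((z - s) • (slope w s z - v)) := by
          rw [hsplit]; exact l1norm_add_le _ _
      _ ≤ _ := by
          rw [l1norm_smul, abs_of_pos hpos]
          gcongr
          exact l1norm_add_smul_mulVec_le B (w s) hpos.le hzB
  rw [inv_mul_lt_iff₀ hpos]
  nlinarith

theorem l1norm_le_exp_mul_of_mu1_le {w : ℝ → Fin n → ℝ} {B : ℝ → Matrix (Fin n) (Fin n) ℝ}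
    {c t : ℝ} (hw : ∀ s, 0 ≤ s → HasDerivAt w (B s *ᵥ w s) s)
    (hB : ∀ s, 0 ≤ s → mu1 (B s) ≤ -c) (ht : 0 ≤ t) :
    l1norm (w t) ≤ Real.exp (-c * t) * l1norm (w 0) := by
  have hcont : ContinuousOn (fun s => l1norm (w s)) (Set.Icc 0 t) := fun s hs =>
    (continuous_l1norm.continuousAt.comp (hw s hs.1).continuousAt).continuousWithinAt
  have h := le_gronwallBound_of_liminf_deriv_right_le (K := -c) (ε := 0) hcont
    (f' := fun s => mu1 (B s) * l1norm (w s))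
    (fun s hs r hr => (eventually_slope_l1norm_lt (hw s hs.1) hr).frequently) le_rfl
    (fun s hs => by simpa using mul_le_mul_of_nonneg_right (hB s hs.1) (l1norm_nonneg _))
    t ⟨ht, le_rfl⟩
  rwa [sub_zero, gronwallBound_ε0, mul_comm] at h

end MatrixMeasure

section Circuit

variable {n : ℕ} (hn : 0 < n) (α : Fin n → ℝ)

/-- `Jmat` with `g'(xₙ)` replaced by an arbitrary `β`: for `β` the secant slope of `g` between
`pₙ` and `qₙ` it maps `p - q` to `F p - F q` exactly. -/
def circuitMatrix (β : ℝ) : Matrix (Fin n) (Fin n) ℝ := fun i j =>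
  if i = j then -α i
  else if (i : ℕ) = (j : ℕ) + 1 then 1
  else if (i : ℕ) = 0 ∧ j = lastIdx n hn then β
  else 0

lemma Jmat_eq_circuitMatrix (k : ℝ) (x : Fin n → ℝ) :
    Jmat n hn k α x = circuitMatrix hn α ((k - 1) / (k + x (lastIdx n hn)) ^ 2) := rfl

lemma circuitMatrix_mulVec_apply (h1 : 1 < n) (β : ℝ) (v : Fin n → ℝ) (i : Fin n) :
    (circuitMatrix hn α β *ᵥ v) i =
      (if (i : ℕ) = 0 then β * v (lastIdx n hn) else v ⟨i - 1, by omega⟩) - α i * v i := by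
  have hL : (lastIdx n hn : ℕ) = n - 1 := rfl
  rw [mulVec, dotProduct]
  split_ifs with hi
  · have hiL : i ≠ lastIdx n hn := fun h => by rw [h, hL] at hi; omega
    rw [sum_eq_add i (lastIdx n hn) hiL ?_ (by simp) (by simp)]
    · simp [circuitMatrix, hiL, hi]
      ring
    · rintro j - ⟨hji, hjL⟩
      simp [circuitMatrix, Ne.symm hji, hi, hjL]
  · set j₀ : Fin n := ⟨i - 1, by omega⟩
    have hij : i ≠ j₀ := fun h => by rw [Fin.ext_iff] at h; simp [j₀] at h; omega
    rw [sum_eq_add i j₀ hij ?_ (by simp) (by simp)]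
    · have hsucc : (i : ℕ) = (j₀ : ℕ) + 1 := by simp [j₀]; omega
      simp [circuitMatrix, hij, hsucc]
      ring
    · rintro j - ⟨hji, hj₀⟩
      have hsucc : (i : ℕ) ≠ j + 1 := fun h => hj₀ (Fin.ext (by simp [j₀]; omega))
      simp [circuitMatrix, Ne.symm hji, hi, hsucc]

lemma gfun_sub_gfun {k p q : ℝ} (hp : 0 < k + p) (hq : 0 < k + q) :
    gfun k p - gfun k q = (k - 1) / ((k + p) * (k + q)) * (p - q) := by
  unfold gfun
  field_simp
  ring

lemma Ffield_sub_Ffield (h1 : 1 < n) {k : ℝ} {p q : Fin n → ℝ} (hp : 0 < k + p (lastIdx n hn))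
    (hq : 0 < k + q (lastIdx n hn)) :
    Ffield n hn k α p - Ffield n hn k α q = circuitMatrix hn α
      ((k - 1) / ((k + p (lastIdx n hn)) * (k + q (lastIdx n hn)))) *ᵥ (p - q) := by
  funext i
  rw [circuitMatrix_mulVec_apply hn α h1]
  by_cases hi : (i : ℕ) = 0
  · simp only [Ffield, hi, if_true, Pi.sub_apply]
    linear_combination gfun_sub_gfun hp hq
  · simp only [Ffield, hi, if_false, Pi.sub_apply]
    ring

end Circuit

section Scaling

variable {n : ℕ} {α : Fin n → ℝ} {ε : ℝ}

def dWeight (α : Fin n → ℝ) (ε : ℝ) (i : Fin n) : ℝ := ∏ j ∈ Iio i, (α j - ε)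

lemma Dmat_eq_diagonal : Dmat n α ε = diagonal (dWeight α ε) := rfl

lemma dWeight_pos (hεα : ∀ i, ε < α i) (i : Fin n) : 0 < dWeight α ε i :=
  prod_pos fun j _ => sub_pos.2 (hεα j)

lemma dWeight_of_val_eq_zero {i : Fin n} (hi : (i : ℕ) = 0) : dWeight α ε i = 1 := by
  have h : Iio i = ∅ := by ext l; simp [Fin.lt_def, hi]
  rw [dWeight, h, prod_empty]

lemma dWeight_of_val_eq_succ {i j : Fin n} (hij : (i : ℕ) = j + 1) :
    dWeight α ε i = (α j - ε) * dWeight α ε j := by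
  have h : Iio i = Iic j := by ext l; simp only [mem_Iio, mem_Iic, Fin.lt_def, Fin.le_def]; omega
  rw [dWeight, dWeight, h, ← mul_prod_Iio_eq_prod_Iic]

lemma inv_Dmat (hεα : ∀ i, ε < α i) :
    (Dmat n α ε)⁻¹ = diagonal fun i => (dWeight α ε i)⁻¹ := by
  refine inv_eq_right_inv ?_
  rw [Dmat_eq_diagonal, diagonal_mul_diagonal, ← diagonal_one]
  exact congrArg diagonal (funext fun i => mul_inv_cancel₀ (dWeight_pos hεα i).ne')

lemma Dmat_mul_mul_inv_apply (hεα : ∀ i, ε < α i) (A : Matrix (Fin n) (Fin n) ℝ) (i j : Fin n) :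
    (Dmat n α ε * A * (Dmat n α ε)⁻¹) i j = dWeight α ε i * A i j / dWeight α ε j := by
  rw [inv_Dmat hεα, mul_diagonal, Dmat_eq_diagonal, diagonal_mul, div_eq_mul_inv]

lemma Dmat_mul_mul_inv_mulVec (hεα : ∀ i, ε < α i) (A : Matrix (Fin n) (Fin n) ℝ)
    (v : Fin n → ℝ) :
    (Dmat n α ε * A * (Dmat n α ε)⁻¹) *ᵥ (Dmat n α ε *ᵥ v) = Dmat n α ε *ᵥ (A *ᵥ v) := by
  have hinv : (Dmat n α ε)⁻¹ * Dmat n α ε = 1 := by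
    rw [inv_Dmat hεα, Dmat_eq_diagonal, diagonal_mul_diagonal, ← diagonal_one]
    exact congrArg diagonal (funext fun i => inv_mul_cancel₀ (dWeight_pos hεα i).ne')
  rw [mulVec_mulVec, Matrix.mul_assoc, Matrix.mul_assoc, hinv, Matrix.mul_one, mulVec_mulVec]

end Scaling

section ScaledCircuit

variable {n : ℕ} (hn : 0 < n) {α : Fin n → ℝ} {ε : ℝ} (hεα : ∀ i, ε < α i) (β : ℝ)
include hεα

lemma colMeasure_scaled_circuitMatrix_of_succ_lt {j : Fin n} (hj : (j : ℕ) + 1 < n) :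
    colMeasure (Dmat n α ε * circuitMatrix hn α β * (Dmat n α ε)⁻¹) j = -ε := by
  set i₀ : Fin n := ⟨j + 1, hj⟩
  have hi₀ : (i₀ : ℕ) = j + 1 := rfl
  have hjL : j ≠ lastIdx n hn := fun h => by rw [Fin.ext_iff] at h; simp [lastIdx] at h; omega
  rw [colMeasure_eq_of_forall_ne (i₀ := i₀) (Fin.ne_of_val_ne (by omega)) ?_]
  · have hd := dWeight_pos hεα j
    rw [Dmat_mul_mul_inv_apply hεα, Dmat_mul_mul_inv_apply hεα, dWeight_of_val_eq_succ hi₀]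
    simp only [circuitMatrix, if_neg (Fin.ne_of_val_ne (by omega) : i₀ ≠ j), hi₀, if_true]
    rw [abs_of_pos (by field_simp; linarith [hεα j])]
    field_simp
    ring
  · intro i hij hii₀
    have hsucc : (i : ℕ) ≠ j + 1 := fun h => hii₀ (Fin.ext h)
    simp [Dmat_mul_mul_inv_apply hεα, circuitMatrix, hij, hsucc, hjL]

lemma colMeasure_scaled_circuitMatrix_last (h1 : 1 < n) :
    colMeasure (Dmat n α ε * circuitMatrix hn α β * (Dmat n α ε)⁻¹) (lastIdx n hn) =
      -α (lastIdx n hn) + |β| / dWeight α ε (lastIdx n hn) := by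
  set i₀ : Fin n := ⟨0, hn⟩
  have hL : (lastIdx n hn : ℕ) = n - 1 := rfl
  have hne : i₀ ≠ lastIdx n hn := Fin.ne_of_val_ne (by simp [i₀, hL]; omega)
  rw [colMeasure_eq_of_forall_ne hne ?_]
  · have hd := dWeight_pos hεα (lastIdx n hn)
    rw [Dmat_mul_mul_inv_apply hεα, Dmat_mul_mul_inv_apply hεα,
      dWeight_of_val_eq_zero (rfl : (i₀ : ℕ) = 0)]
    have hentry : circuitMatrix hn α β i₀ (lastIdx n hn) = β := by
      simp [circuitMatrix, hne, i₀, hL]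
    have hdiag : circuitMatrix hn α β (lastIdx n hn) (lastIdx n hn) = -α (lastIdx n hn) :=
      if_pos rfl
    rw [hentry, hdiag, one_mul, abs_div, abs_of_pos hd]
    field_simp
  · intro i hiL hii₀
    have hsucc : (i : ℕ) ≠ (lastIdx n hn : ℕ) + 1 := by omega
    have hi0 : (i : ℕ) ≠ 0 := fun h => hii₀ (Fin.ext h)
    simp [Dmat_mul_mul_inv_apply hεα, circuitMatrix, hiL, hsucc, hi0]

lemma mu1_scaled_circuitMatrix_le (h1 : 1 < n) (hε : 0 < ε)
    (hβ : |β| ≤ (α (lastIdx n hn) - ε / 2) * dWeight α ε (lastIdx n hn)) :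
    mu1 (Dmat n α ε * circuitMatrix hn α β * (Dmat n α ε)⁻¹) ≤ -ε / 2 := by
  have : NeZero n := ⟨hn.ne'⟩
  refine mu1_le_of_forall_colMeasure_le fun j => ?_
  by_cases hj : (j : ℕ) + 1 < n
  · rw [colMeasure_scaled_circuitMatrix_of_succ_lt hn hεα β hj]
    linarith
  · obtain rfl : j = lastIdx n hn := Fin.ext (by simp only [lastIdx]; omega)
    rw [colMeasure_scaled_circuitMatrix_last hn hεα β h1]
    have := (div_le_iff₀ (dWeight_pos hεα _)).2 hβ
    linarith

end ScaledCircuit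

lemma exists_pos_lt_mul_dWeight_last {n : ℕ} (hn : 0 < n) {α : Fin n → ℝ} (hα : ∀ i, 0 < α i)
    {c : ℝ} (hc : c < ∏ i, α i) :
    ∃ ε, 0 < ε ∧ (∀ i, ε < α i) ∧ c < (α (lastIdx n hn) - ε / 2) * dWeight α ε (lastIdx n hn) := by
  set f : ℝ → ℝ := fun ε => (α (lastIdx n hn) - ε / 2) * dWeight α ε (lastIdx n hn)
  have hf : Continuous f := by unfold f dWeight; fun_prop
  have hf0 : f 0 = ∏ i, α i := by
    have huniv : Iic (lastIdx n hn) = univ := by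
      ext l; simp only [mem_Iic, mem_univ, iff_true, Fin.le_def, lastIdx]; omega
    simp only [f, dWeight, sub_zero, zero_div]
    rw [mul_prod_Iio_eq_prod_Iic, huniv]
  have hfc : ∀ᶠ ε in 𝓝 0, c < f ε := hf.continuousAt.eventually_const_lt (hf0 ▸ hc)
  have hα' : ∀ᶠ ε in 𝓝 0, ∀ i, ε < α i := eventually_all.2 fun i => eventually_lt_nhds (hα i)
  obtain ⟨ε, ⟨hεc, hεα⟩, hε⟩ :=
    (((hfc.and hα').filter_mono nhdsWithin_le_nhds).and self_mem_nhdsWithin).exists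
      (f := 𝓝[>] (0 : ℝ))
  exact ⟨ε, hε, hεα, hεc⟩

lemma div_mul_le_div_sq {k p q : ℝ} (hk : 1 < k) (hp : 0 ≤ p) (hq : 0 ≤ q) :
    (k - 1) / ((k + p) * (k + q)) ≤ (k - 1) / k ^ 2 := by
  apply div_le_div_of_nonneg_left (by linarith) (by positivity)
  nlinarith

/-- If `k - 1 < αk²` (with `α = ∏αᵢ`) then there exists `ε > 0` such that the scaled `L¹`
matrix measure satisfies `μ_{1,D_ε}(J(x)) ≤ -ε/2 < 0` for all `x ∈ ℝⁿ₊`; hence the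
biochemical control circuit is contractive on `ℝⁿ₊` with respect to the norm
`|z| = |D_ε z|₁`. -/
theorem stmt16 (n : ℕ) (hn : 2 ≤ n) (k : ℝ) (hk : 1 < k)
    (α : Fin n → ℝ) (hα : ∀ i, 0 < α i)
    (hcond : k - 1 < (∏ i, α i) * k ^ 2)
    (sol : ℝ → (Fin n → ℝ) → (Fin n → ℝ))
    (hsol0 : ∀ a, (∀ i, 0 ≤ a i) → sol 0 a = a)
    (hode : ∀ a, (∀ i, 0 ≤ a i) → ∀ t : ℝ, 0 ≤ t →
      HasDerivAt (fun s => sol s a) (Ffield n (by omega) k α (sol t a)) t)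
    (hinv : ∀ a, (∀ i, 0 ≤ a i) → ∀ t : ℝ, 0 ≤ t → ∀ i, 0 ≤ sol t a i) :
    ∃ ε : ℝ, 0 < ε ∧ (∀ i, ε < α i) ∧
      (∀ x : Fin n → ℝ, (∀ i, 0 ≤ x i) →
        mu1 (Dmat n α ε * Jmat n (by omega) k α x * (Dmat n α ε)⁻¹) ≤ -ε / 2) ∧
      ∃ c : ℝ, 0 < c ∧
        ∀ t : ℝ, 0 ≤ t → ∀ a b : Fin n → ℝ, (∀ i, 0 ≤ a i) → (∀ i, 0 ≤ b i) →
          (∑ i, |(Dmat n α ε).mulVec (sol t a - sol t b) i|) ≤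
            Real.exp (-c * t) * ∑ i, |(Dmat n α ε).mulVec (a - b) i| := by
  have hn0 : 0 < n := by omega
  set L := lastIdx n hn0
  obtain ⟨ε, hε, hεα, hεL⟩ := exists_pos_lt_mul_dWeight_last hn0 hα
    (c := (k - 1) / k ^ 2) (by rwa [div_lt_iff₀ (by positivity)])
  set D := Dmat n α ε
  have hmu : ∀ p q : ℝ, 0 ≤ p → 0 ≤ q →
      mu1 (D * circuitMatrix hn0 α ((k - 1) / ((k + p) * (k + q))) * D⁻¹) ≤ -ε / 2 := by
    intro p q hp hq
    refine mu1_scaled_circuitMatrix_le hn0 hεα _ hn hε ?_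
    rw [abs_of_nonneg (div_nonneg (by linarith) (by positivity))]
    exact (div_mul_le_div_sq hk hp hq).trans hεL.le
  refine ⟨ε, hε, hεα, fun x hx => ?_, ε / 2, by positivity, fun t ht a b ha hb => ?_⟩
  · rw [Jmat_eq_circuitMatrix, sq]
    exact hmu _ _ (hx L) (hx L)
  set β : ℝ → ℝ := fun s => (k - 1) / ((k + sol s a L) * (k + sol s b L))
  have hderiv : ∀ s, 0 ≤ s → HasDerivAt (fun s => D *ᵥ (sol s a - sol s b))
      ((D * circuitMatrix hn0 α (β s) * D⁻¹) *ᵥ (D *ᵥ (sol s a - sol s b))) s := by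
    intro s hs
    rw [Dmat_mul_mul_inv_mulVec hεα, ← Ffield_sub_Ffield hn0 α hn
      (by linarith [hinv a ha s hs L]) (by linarith [hinv b hb s hs L])]
    exact hasDerivAt_mulVec D ((hode a ha s hs).sub (hode b hb s hs))
  have hdecay := l1norm_le_exp_mul_of_mu1_le hderiv
    (fun s hs => (hmu _ _ (hinv a ha s hs L) (hinv b hb s hs L)).trans_eq (neg_div 2 ε)) ht
  simpa only [l1norm, hsol0 a ha, hsol0 b hb] using hdecay
end
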